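/- arXiv:2212.06306 — 2 statements merged into one kernel-verified Lean document; each statement's English description precedes it below -/
import Mathlib

section
/- Let β < 0 and let T_β = {(x,y) ∈ ℝ² : x ≥ 1, 0 ≤ y ≤ x^β}. Then T_β is Lipschitz normally embedded with constant 2: for all P, Q ∈ T_β, d_inn(P,Q) ≤ 2‖P - Q‖. -/
/-!
Join `P` and `Q` by a staircase inside `T_β`: straight down from `P` to the height
`h = min (P 1) (Q 1)`, horizontally to the vertical line through `Q`, and straight up to `Q`.
The horizontal leg stays in `T_β` because `x ↦ x ^ β` is decreasing, so the graph over the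
`x`-range between `P` and `Q` lies above its value at the farther end, which is at least `h`.
The staircase has length `|P 0 - Q 0| + |P 1 - Q 1| ≤ 2 ‖P - Q‖`.
-/

/-- The inner (length/geodesic) distance on a subset `X`. -/
noncomputable def innerDist {E : Type*} [PseudoEMetricSpace E] (X : Set E) (x y : E) : ENNReal :=
  ⨅ γ : {γ : ℝ → E // ContinuousOn γ (Set.Icc 0 1) ∧ Set.MapsTo γ (Set.Icc 0 1) X ∧
      γ 0 = x ∧ γ 1 = y}, eVariationOn γ.1 (Set.Icc 0 1)

/-- The strip T_β = {(x,y) ∈ ℝ² : x ≥ 1, 0 ≤ y ≤ x^β}. -/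
def Tstrip (β : ℝ) : Set (EuclideanSpace ℝ (Fin 2)) :=
  {p | 1 ≤ p 0 ∧ 0 ≤ p 1 ∧ p 1 ≤ (p 0) ^ β}

open Set

section InnerDist

variable {E : Type*}

lemma reparam_two_mul_add [PseudoEMetricSpace E] {X : Set E} {γ γ' : ℝ → E} {b c d : ℝ}
    (hc : ContinuousOn γ' (Icc 0 1)) (hX : MapsTo γ' (Icc 0 1) X)
    (hγ : EqOn γ (γ' ∘ (2 * · + b)) (Icc c d)) (hbc : 2 * c + b = 0) (hbd : 2 * d + b = 1) :
    ContinuousOn γ (Icc c d) ∧ MapsTo γ (Icc c d) X ∧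
      eVariationOn γ (Icc c d) = eVariationOn γ' (Icc 0 1) := by
  have himg : (2 * · + b) '' Icc c d = Icc 0 1 := by
    rw [image_affine_Icc' two_pos, hbc, hbd]
  have hmaps : MapsTo (2 * · + b) (Icc c d) (Icc 0 1) := himg ▸ mapsTo_image _ _
  refine ⟨(hc.comp (by fun_prop) hmaps).congr hγ, (hX.comp hmaps).congr hγ.symm, ?_⟩
  rw [eVariationOn.eq_of_eqOn hγ, eVariationOn.comp_eq_of_monotoneOn, himg]
  exact fun s _ t _ hst => by linarith

theorem innerDist_triangle [PseudoEMetricSpace E] (X : Set E) (x y z : E) :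
    innerDist X x z ≤ innerDist X x y + innerDist X y z := by
  refine ENNReal.le_iInf_add_iInf fun ⟨γ₁, hc₁, hX₁, h0₁, h1₁⟩ ⟨γ₂, hc₂, hX₂, h0₂, h1₂⟩ => ?_
  let γ : ℝ → E := fun t => if t ≤ 1 / 2 then γ₁ (2 * t) else γ₂ (2 * t - 1)
  obtain ⟨hcl, hXl, hvl⟩ := reparam_two_mul_add (γ := γ) (b := 0) (c := 0) (d := 1 / 2) hc₁ hX₁
    (fun t ht => by simp only [γ, Function.comp, if_pos ht.2, add_zero]) (by norm_num)
    (by norm_num)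
  obtain ⟨hcr, hXr, hvr⟩ := reparam_two_mul_add (γ := γ) (b := -1) (c := 1 / 2) (d := 1) hc₂ hX₂
    (fun t ht => by
      rcases ht.1.eq_or_lt with rfl | h
      · norm_num [γ, h1₁, h0₂]
      · simp only [γ, Function.comp, if_neg (not_le.2 h), sub_eq_add_neg]) (by norm_num)
    (by norm_num)
  have hsplit : Icc (0 : ℝ) 1 = Icc 0 (1 / 2) ∪ Icc (1 / 2) 1 :=
    (Icc_union_Icc_eq_Icc (by norm_num) (by norm_num)).symm
  refine iInf_le_of_le ⟨γ, ?_, ?_, by simp [γ, h0₁], by norm_num [γ, h1₂]⟩ ?_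
  · rw [hsplit]; exact hcl.union_of_isClosed hcr isClosed_Icc isClosed_Icc
  · rw [hsplit]; exact hXl.union hXr
  · have := eVariationOn.Icc_add_Icc γ (s := univ) (by norm_num : (0 : ℝ) ≤ 1 / 2)
      (by norm_num : (1 / 2 : ℝ) ≤ 1) (mem_univ _)
    simp only [univ_inter] at this
    rw [← this, hvl, hvr]

theorem innerDist_le_edist_of_segment_subset [SeminormedAddCommGroup E] [NormedSpace ℝ E]
    {X : Set E} {x y : E} (h : segment ℝ x y ⊆ X) :
    innerDist X x y ≤ edist x y := by
  have hX : MapsTo (AffineMap.lineMap x y) (Icc (0 : ℝ) 1) X :=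
    (segment_eq_image_lineMap ℝ x y ▸ mapsTo_image _ _).mono_right h
  refine iInf_le_of_le ⟨AffineMap.lineMap x y, AffineMap.lineMap_continuous.continuousOn, hX,
    by simp, by simp⟩ ?_
  calc eVariationOn (AffineMap.lineMap x y) (Icc (0 : ℝ) 1)
      ≤ nndist x y * eVariationOn id (Icc (0 : ℝ) 1) :=
        (lipschitzWith_lineMap x y).lipschitzOnWith.comp_eVariationOn_le (mapsTo_id _)
    _ = nndist x y * ENNReal.ofReal (id 1 - id 0) := by
        rw [← univ_inter (Icc _ _),
          (monotone_id.monotoneOn univ).eVariationOn_eq (mem_univ _) (mem_univ _)]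
    _ = edist x y := by rw [edist_nndist]; simp

end InnerDist

theorem EuclideanSpace.dist_eq_of_forall_ne_apply_eq {ι : Type*} [Fintype ι]
    {x y : EuclideanSpace ℝ ι} (i : ι) (h : ∀ j ≠ i, x j = y j) :
    dist x y = dist (x i) (y i) := by
  rw [EuclideanSpace.dist_eq, Finset.sum_eq_single i (fun j _ hj => by simp [h j hj]) (by simp),
    Real.sqrt_sq dist_nonneg]

theorem convex_Tstrip_inter_vertical (β c : ℝ) : Convex ℝ (Tstrip β ∩ {p | p 0 = c}) := by
  rintro p ⟨⟨hp, hp₀, hp₁⟩, rfl⟩ q ⟨⟨-, hq₀, hq₁⟩, hq⟩ a b ha hb hab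
  simp only [mem_ofPred_eq] at hq
  have hr : (a • p + b • q) 0 = p 0 := by simpa [hq] using Convex.combo_self hab (p 0)
  rw [mem_inter_iff, Tstrip, mem_ofPred_eq, mem_ofPred_eq, hr]
  simp only [PiLp.add_apply, PiLp.smul_apply, smul_eq_mul]
  refine ⟨⟨hp, by positivity, ?_⟩, trivial⟩
  exact (Convex.combo_le_max _ _ ha hb hab).trans (max_le hp₁ (hq ▸ hq₁))

theorem convex_Tstrip_inter_horizontal {β : ℝ} (hβ : β ≤ 0) (c : ℝ) :
    Convex ℝ (Tstrip β ∩ {p | p 1 = c}) := by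
  rintro p ⟨⟨hp, -, hp₁⟩, rfl⟩ q ⟨⟨hq, hq₀, hq₁⟩, hq'⟩ a b ha hb hab
  simp only [mem_ofPred_eq] at hq'
  have hr : (a • p + b • q) 1 = p 1 := by simpa [hq'] using Convex.combo_self hab (p 1)
  rw [mem_inter_iff, Tstrip, mem_ofPred_eq, mem_ofPred_eq, hr]
  simp only [PiLp.add_apply, PiLp.smul_apply, smul_eq_mul]
  have hmax : p 1 ≤ max (p 0) (q 0) ^ β := by
    rcases max_choice (p 0) (q 0) with h | h <;> rw [h]
    exacts [hp₁, hq' ▸ hq₁]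
  have hmin : 1 ≤ a * p 0 + b * q 0 := (le_min hp hq).trans (Convex.min_le_combo _ _ ha hb hab)
  refine ⟨⟨hmin, hq' ▸ hq₀, hmax.trans ?_⟩, trivial⟩
  exact Real.rpow_le_rpow_of_nonpos (by linarith) (Convex.combo_le_max _ _ ha hb hab) hβ

theorem mem_Tstrip_of_le_apply_one {β b : ℝ} {P : EuclideanSpace ℝ (Fin 2)}
    (hP : P ∈ Tstrip β) (hb₀ : 0 ≤ b) (hb : b ≤ P 1) : !₂[P 0, b] ∈ Tstrip β :=
  ⟨hP.1, hb₀, hb.trans hP.2.2⟩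

theorem innerDist_Tstrip_le {β : ℝ} (hβ : β ≤ 0) {P Q : EuclideanSpace ℝ (Fin 2)}
    (hP : P ∈ Tstrip β) (hQ : Q ∈ Tstrip β) :
    innerDist (Tstrip β) P Q ≤ ENNReal.ofReal (dist (P 0) (Q 0) + dist (P 1) (Q 1)) := by
  let h := min (P 1) (Q 1)
  have hh : 0 ≤ h := le_min hP.2.1 hQ.2.1
  have hP' := mem_Tstrip_of_le_apply_one hP hh (min_le_left _ _)
  have hQ' := mem_Tstrip_of_le_apply_one hQ hh (min_le_right _ _)
  have hPP' : segment ℝ P !₂[P 0, h] ⊆ Tstrip β :=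
    ((convex_Tstrip_inter_vertical β (P 0)).segment_subset ⟨hP, rfl⟩ ⟨hP', rfl⟩).trans
      inter_subset_left
  have hP'Q' : segment ℝ !₂[P 0, h] !₂[Q 0, h] ⊆ Tstrip β :=
    ((convex_Tstrip_inter_horizontal hβ h).segment_subset ⟨hP', rfl⟩ ⟨hQ', rfl⟩).trans
      inter_subset_left
  have hQ'Q : segment ℝ !₂[Q 0, h] Q ⊆ Tstrip β :=
    ((convex_Tstrip_inter_vertical β (Q 0)).segment_subset ⟨hQ', rfl⟩ ⟨hQ, rfl⟩).trans
      inter_subset_left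
  have hd₁ : dist P !₂[P 0, h] = dist (P 1) h :=
    EuclideanSpace.dist_eq_of_forall_ne_apply_eq 1 (by simp [Fin.forall_fin_two])
  have hd₂ : dist !₂[P 0, h] !₂[Q 0, h] = dist (P 0) (Q 0) :=
    EuclideanSpace.dist_eq_of_forall_ne_apply_eq 0 (by simp [Fin.forall_fin_two])
  have hd₃ : dist !₂[Q 0, h] Q = dist h (Q 1) :=
    EuclideanSpace.dist_eq_of_forall_ne_apply_eq 1 (by simp [Fin.forall_fin_two])
  have hh_mem : h ∈ segment ℝ (P 1) (Q 1) := by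
    rw [segment_eq_uIcc]; exact ⟨le_rfl, min_le_max⟩
  calc innerDist (Tstrip β) P Q
      ≤ innerDist (Tstrip β) P !₂[P 0, h] + innerDist (Tstrip β) !₂[P 0, h] !₂[Q 0, h] +
          innerDist (Tstrip β) !₂[Q 0, h] Q :=
        (innerDist_triangle _ _ _ _).trans (add_le_add_left (innerDist_triangle _ _ _ _) _)
    _ ≤ edist P !₂[P 0, h] + edist !₂[P 0, h] !₂[Q 0, h] + edist !₂[Q 0, h] Q := by
        gcongr <;> exact innerDist_le_edist_of_segment_subset ‹_›
    _ = ENNReal.ofReal (dist (P 0) (Q 0) + dist (P 1) (Q 1)) := by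
        rw [edist_dist, edist_dist, edist_dist, hd₁, hd₂, hd₃, ← ENNReal.ofReal_add,
          ← ENNReal.ofReal_add, ← dist_add_dist_of_mem_segment hh_mem]
        · congr 1; ring
        all_goals positivity

/-- For β < 0, T_β is LNE with constant 2. -/
theorem stmt4 (β : ℝ) (hβ : β < 0) :
    ∀ P ∈ Tstrip β, ∀ Q ∈ Tstrip β,
      innerDist (Tstrip β) P Q ≤ ENNReal.ofReal (2 * ‖P - Q‖) := by
  intro P hP Q hQ
  refine (innerDist_Tstrip_le hβ.le hP hQ).trans (ENNReal.ofReal_le_ofReal ?_)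
  rw [two_mul, ← dist_eq_norm]
  gcongr <;> exact PiLp.dist_apply_le _ _ _
end

section
/- For β ≤ 1 and Γ₁ = {(x,0) : x ≥ 1}, Γ₂ = {(x, x^β) : x ≥ 1} in ℝ², and any K > 1, the function f(r) = dist(A_r^K(Γ₁), A_r^K(Γ₂)) satisfies log f(r)/log r → β as r → ∞, where A_r^K(X) = {y ∈ X : r/K ≤ ‖y‖ ≤ Kr}. Hence the contact at infinity Cont(Γ₁, Γ₂) equals β. -/
/-- The distance between two subsets: inf{‖x − y‖ : x ∈ X, y ∈ Y}. -/
noncomputable def setDist {E : Type*} [SeminormedAddCommGroup E] (X Y : Set E) : ℝ :=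
  sInf ((fun p : E × E => dist p.1 p.2) '' X ×ˢ Y)

/-- The annular piece A_r^K(X) = {y ∈ X : r/K ≤ ‖y‖ ≤ Kr}. -/
def annPiece {E : Type*} [SeminormedAddCommGroup E] (K r : ℝ) (X : Set E) : Set E :=
  {y ∈ X | r / K ≤ ‖y‖ ∧ ‖y‖ ≤ K * r}

/-!
Write `Γ₂ = {(x, x^β)}`. A point of `A_r^K(Γ₂)` has `x^β ≤ x`, so its norm lies in
`[x, √2 x]` and hence `x ≍ r`; its distance to `Γ₁` is at least `x^β ≍ r^β`. Conversely, for
`β < 1` the points `(r, 0)` and `(r, r^β)` both lie in the annulus for large `r` and are `r^β`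
apart, while for `β = 1` two points of norm `r` are at most `2r` apart. So
`dist(A_r^K(Γ₁), A_r^K(Γ₂)) ≍ r^β`, and taking logarithms gives the limit.
-/

open Real Filter Topology

section SetDist

variable {E : Type*} [SeminormedAddCommGroup E] {X Y : Set E}

lemma setDist_le_dist {x y : E} (hx : x ∈ X) (hy : y ∈ Y) : setDist X Y ≤ dist x y :=
  csInf_le ⟨0, by rintro _ ⟨_, -, rfl⟩; exact dist_nonneg⟩ ⟨(x, y), ⟨hx, hy⟩, rfl⟩

lemma le_setDist {a : ℝ} (hX : X.Nonempty) (hY : Y.Nonempty)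
    (h : ∀ x ∈ X, ∀ y ∈ Y, a ≤ dist x y) : a ≤ setDist X Y :=
  le_csInf ((hX.prod hY).image _) <| by
    rintro _ ⟨⟨x, y⟩, ⟨hx, hy⟩, rfl⟩
    exact h x hx y hy

end SetDist

section Asymptotics

lemma tendsto_log_const_mul_rpow_div_log {c : ℝ} (hc : 0 < c) (β : ℝ) :
    Tendsto (fun r => log (c * r ^ β) / log r) atTop (𝓝 β) := by
  have h : Tendsto (fun r => log c / log r + β) atTop (𝓝 (0 + β)) :=
    (tendsto_const_nhds.div_atTop tendsto_log_atTop).add tendsto_const_nhds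
  rw [zero_add] at h
  refine h.congr' ?_
  filter_upwards [eventually_gt_atTop 1] with r hr
  have hlog : log r ≠ 0 := (log_pos hr).ne'
  rw [log_mul hc.ne' (rpow_pos_of_pos (by linarith) β).ne', log_rpow (by linarith)]
  field_simp

lemma tendsto_log_div_log_of_rpow_bounds {f : ℝ → ℝ} {β c C : ℝ} (hc : 0 < c) (hC : 0 < C)
    (hf : ∀ᶠ r in atTop, c * r ^ β ≤ f r ∧ f r ≤ C * r ^ β) :
    Tendsto (fun r => log (f r) / log r) atTop (𝓝 β) := by
  refine tendsto_of_tendsto_of_tendsto_of_le_of_le'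
    (tendsto_log_const_mul_rpow_div_log hc β) (tendsto_log_const_mul_rpow_div_log hC β) ?_ ?_
  all_goals
    filter_upwards [hf, eventually_gt_atTop 1] with r ⟨hlow, hup⟩ hr
    have hcr : 0 < c * r ^ β := mul_pos hc (rpow_pos_of_pos (by linarith) β)
  · exact div_le_div_of_nonneg_right (log_le_log hcr hlow) (log_pos hr).le
  · exact div_le_div_of_nonneg_right (log_le_log (hcr.trans_le hlow) hup) (log_pos hr).le

lemma min_rpow_mul_rpow_le_rpow {a b r x : ℝ} (β : ℝ) (ha : 0 < a) (hr : 0 < r)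
    (hax : a * r ≤ x) (hxb : x ≤ b * r) :
    min (a ^ β) (b ^ β) * r ^ β ≤ x ^ β := by
  have hx : 0 < x := (mul_pos ha hr).trans_le hax
  have hb : 0 < b := pos_of_mul_pos_left (hx.trans_le hxb) hr.le
  rcases le_total 0 β with hβ | hβ
  · calc min (a ^ β) (b ^ β) * r ^ β ≤ a ^ β * r ^ β := by gcongr; exact min_le_left _ _
      _ = (a * r) ^ β := (mul_rpow ha.le hr.le).symm
      _ ≤ x ^ β := rpow_le_rpow (by positivity) hax hβ
  · calc min (a ^ β) (b ^ β) * r ^ β ≤ b ^ β * r ^ β := by gcongr; exact min_le_right _ _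
      _ = (b * r) ^ β := (mul_rpow hb.le hr.le).symm
      _ ≤ x ^ β := rpow_le_rpow_of_nonpos hx hxb hβ

end Asymptotics

section Plane

def graphFromOne (g : ℝ → ℝ) : Set (EuclideanSpace ℝ (Fin 2)) :=
  {p | 1 ≤ p 0 ∧ p 1 = g (p 0)}

lemma norm_eq_sqrt_fin_two (p : EuclideanSpace ℝ (Fin 2)) : ‖p‖ = √(p 0 ^ 2 + p 1 ^ 2) := by
  simp [EuclideanSpace.norm_eq, Fin.sum_univ_two]

lemma norm_vec_two (a b : ℝ) : ‖!₂[a, b]‖ = √(a ^ 2 + b ^ 2) := by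
  simp [EuclideanSpace.norm_eq, Fin.sum_univ_two]

lemma dist_vec_two (a b c d : ℝ) :
    dist !₂[a, b] !₂[c, d] = √((a - c) ^ 2 + (b - d) ^ 2) := by
  simp [EuclideanSpace.dist_eq, Fin.sum_univ_two, Real.dist_eq]

lemma abs_le_dist_of_mem_graphFromOne {g : ℝ → ℝ} {p q : EuclideanSpace ℝ (Fin 2)}
    (hp : p ∈ graphFromOne fun _ => 0) (hq : q ∈ graphFromOne g) :
    |g (q 0)| ≤ dist p q := by
  have h := PiLp.dist_apply_le p q 1
  rwa [Real.dist_eq, hp.2, hq.2, zero_sub, abs_neg] at h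

lemma norm_le_sqrt_two_mul_of_mem_graphFromOne_rpow {β : ℝ} (hβ : β ≤ 1)
    {q : EuclideanSpace ℝ (Fin 2)} (hq : q ∈ graphFromOne (· ^ β)) :
    ‖q‖ ≤ √2 * q 0 := by
  obtain ⟨hx, hy⟩ := hq
  have hxβ : q 0 ^ β ≤ q 0 := by
    simpa using rpow_le_rpow_of_exponent_le hx hβ
  have hxβ0 : 0 ≤ q 0 ^ β := rpow_nonneg (by linarith) β
  calc ‖q‖ = √(q 0 ^ 2 + (q 0 ^ β) ^ 2) := by rw [norm_eq_sqrt_fin_two, hy]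
    _ ≤ √(2 * q 0 ^ 2) := sqrt_le_sqrt (by nlinarith)
    _ = √2 * q 0 := by rw [sqrt_mul zero_le_two, sqrt_sq (by linarith)]

lemma min_rpow_mul_rpow_le_of_mem_annPiece {β K r : ℝ} (hβ : β ≤ 1) (hK : 0 < K) (hr : 0 < r)
    {q : EuclideanSpace ℝ (Fin 2)} (hq : q ∈ annPiece K r (graphFromOne (· ^ β))) :
    min ((√2 * K)⁻¹ ^ β) (K ^ β) * r ^ β ≤ q 0 ^ β := by
  obtain ⟨hqΓ, hlow, hup⟩ := hq
  have hnorm := norm_le_sqrt_two_mul_of_mem_graphFromOne_rpow hβ hqΓ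
  have hxlow : (√2 * K)⁻¹ * r ≤ q 0 := by
    rw [inv_mul_eq_div, div_le_iff₀ (by positivity)]
    rw [div_le_iff₀ hK] at hlow
    nlinarith
  have hxup : q 0 ≤ K * r :=
    (le_abs_self _).trans ((PiLp.norm_apply_le q 0).trans hup)
  exact min_rpow_mul_rpow_le_rpow β (by positivity) hr hxlow hxup

lemma exists_close_pair_of_lt_one {β K : ℝ} (hβ : β < 1) (hK : 1 < K) :
    ∀ᶠ r in atTop, ∃ p ∈ annPiece K r (graphFromOne fun _ => 0),
      ∃ q ∈ annPiece K r (graphFromOne (· ^ β)), dist p q ≤ 2 * r ^ β := by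
  have hsmall : ∀ᶠ r : ℝ in atTop, r ^ (β - 1) < K - 1 := by
    have h := tendsto_rpow_neg_atTop (y := 1 - β) (by linarith)
    simp only [neg_sub] at h
    exact h.eventually_lt_const (by linarith)
  filter_upwards [hsmall, eventually_ge_atTop 1] with r hrβ hr
  have hr0 : 0 < r := by linarith
  have hrβ0 : 0 < r ^ β := rpow_pos_of_pos hr0 β
  have hrβK : r ^ β ≤ (K - 1) * r := by
    rw [show r ^ β = r ^ (β - 1) * r by rw [← rpow_add_one hr0.ne']; norm_num]
    gcongr
  have hp_norm : ‖!₂[r, 0]‖ = r := by simp [norm_vec_two, sqrt_sq hr0.le]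
  have hpq : dist !₂[r, 0] !₂[r, r ^ β] = r ^ β := by
    simp [dist_vec_two, sqrt_sq hrβ0.le]
  have hq_low : r ≤ ‖!₂[r, r ^ β]‖ := by
    simpa [abs_of_pos hr0] using PiLp.norm_apply_le !₂[r, r ^ β] 0
  have hq_up : ‖!₂[r, r ^ β]‖ ≤ r + r ^ β := by
    rw [norm_vec_two, sqrt_le_left (by positivity)]
    nlinarith
  refine ⟨!₂[r, 0], ⟨⟨by simpa using hr, by simp⟩, ?_, ?_⟩,
    !₂[r, r ^ β], ⟨⟨by simpa using hr, by simp⟩, ?_, ?_⟩, by linarith⟩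
  · rw [hp_norm]; exact div_le_self hr0.le hK.le
  · rw [hp_norm]; nlinarith
  · exact (div_le_self hr0.le hK.le).trans hq_low
  · linarith

lemma exists_close_pair_of_eq_one {K : ℝ} (hK : 1 < K) :
    ∀ᶠ r in atTop, ∃ p ∈ annPiece K r (graphFromOne fun _ => 0),
      ∃ q ∈ annPiece K r (graphFromOne (· ^ (1 : ℝ))), dist p q ≤ 2 * r ^ (1 : ℝ) := by
  filter_upwards [eventually_ge_atTop √2] with r hr
  have hs : 0 < √2 := by positivity
  have hr0 : 0 < r := hs.trans_le hr
  have hp_norm : ‖!₂[r, 0]‖ = r := by simp [norm_vec_two, sqrt_sq hr0.le]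
  have hq_norm : ‖!₂[r / √2, r / √2]‖ = r := by
    rw [norm_vec_two, div_pow, sq_sqrt zero_le_two, ← two_mul,
      mul_div_cancel₀ _ two_ne_zero, sqrt_sq hr0.le]
  have hr_mem : r / K ≤ r ∧ r ≤ K * r :=
    ⟨div_le_self hr0.le hK.le, le_mul_of_one_le_left hr0.le hK.le⟩
  refine ⟨!₂[r, 0], ⟨⟨by simpa using one_lt_sqrt_two.le.trans hr, by simp⟩,
      by rw [hp_norm]; exact hr_mem⟩,
    !₂[r / √2, r / √2], ⟨⟨?_, by simp⟩, by rw [hq_norm]; exact hr_mem⟩, ?_⟩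
  · simpa [le_div_iff₀ hs] using hr
  · calc dist !₂[r, 0] !₂[r / √2, r / √2]
        ≤ ‖!₂[r, 0]‖ + ‖!₂[r / √2, r / √2]‖ := dist_le_norm_add_norm _ _
      _ = 2 * r ^ (1 : ℝ) := by rw [hp_norm, hq_norm, rpow_one]; ring

end Plane

/-- For β ≤ 1, Γ₁ = {(x,0) : x ≥ 1}, Γ₂ = {(x,x^β) : x ≥ 1} and any K > 1,
log dist(A_r^K(Γ₁), A_r^K(Γ₂)) / log r → β as r → ∞; hence Cont(Γ₁,Γ₂) = β. -/
theorem stmt16 (β : ℝ) (hβ : β ≤ 1) (K : ℝ) (hK : 1 < K) :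
    Filter.Tendsto (fun r : ℝ =>
        Real.log (setDist
          (annPiece K r {p : EuclideanSpace ℝ (Fin 2) | 1 ≤ p 0 ∧ p 1 = 0})
          (annPiece K r {p : EuclideanSpace ℝ (Fin 2) | 1 ≤ p 0 ∧ p 1 = (p 0) ^ β})) /
        Real.log r)
      Filter.atTop (nhds β) := by
  have hK0 : 0 < K := by linarith
  have hpairs : ∀ᶠ r in atTop, ∃ p ∈ annPiece K r (graphFromOne fun _ => 0),
      ∃ q ∈ annPiece K r (graphFromOne (· ^ β)), dist p q ≤ 2 * r ^ β := by
    rcases hβ.lt_or_eq with hβ1 | rfl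
    · exact exists_close_pair_of_lt_one hβ1 hK
    · exact exists_close_pair_of_eq_one hK
  refine tendsto_log_div_log_of_rpow_bounds (c := min ((√2 * K)⁻¹ ^ β) (K ^ β))
    (lt_min (by positivity) (by positivity)) two_pos ?_
  filter_upwards [hpairs, eventually_gt_atTop 0] with r ⟨p, hp, q, hq, hpq⟩ hr
  refine ⟨le_setDist ⟨p, hp⟩ ⟨q, hq⟩ fun a ha b hb => ?_, (setDist_le_dist hp hq).trans hpq⟩
  exact (min_rpow_mul_rpow_le_of_mem_annPiece hβ hK0 hr hb).trans <|
    (le_abs_self _).trans (abs_le_dist_of_mem_graphFromOne (g := (· ^ β)) ha.1 hb.1)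
end
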